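/- arXiv:math/0511163 — 2 statements merged into one kernel-verified Lean document; each statement's English description precedes it below -/
import Mathlib

section
/- Let q be a power of a prime p, let n ≥ 1 be an integer with p ∤ n, and let Ψ : F_q → ℂ^× be a nontrivial additive character. Then Σ_{X ∈ gl_n(F_q)} q^{dim 𝔠(X)} Ψ(tr X) = 0, where for X ∈ gl_n(F_q) the centralizer is 𝔠(X) = { Y ∈ gl_n(F_q) : XY = YX } and dim denotes its dimension as an F_q-vector space. -/
/-!
Write `q ^ dim 𝔠(X)` as the number of `Y` commuting with `X` and exchange the two sums: the
sum becomes `∑_Y ∑_{X ∈ 𝔠(Y)} Ψ(tr X)`. Each inner sum is a sum of the character `Ψ ∘ tr` over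
the vector space `𝔠(Y)`, which vanishes because `𝔠(Y)` contains the scalar matrices and
`tr (c • 1) = n c` with `n ≠ 0` in `F`, so `Ψ ∘ tr` is nontrivial on `𝔠(Y)`. The argument works
in any finite `F`-algebra, with `tr` replaced by any linear form that does not vanish at `1`.
-/

open Finset

theorem AddChar.sum_comp_linearMap_eq_zero {F V R : Type*} [Field F] [AddCommGroup V]
    [Module F V] [Fintype V] [CommRing R] [IsDomain R] [CharZero R]
    {ψ : AddChar F R} (hψ : ψ ≠ 1) {f : V →ₗ[F] F} (hf : f ≠ 0) :
    ∑ v, ψ (f v) = 0 := by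
  obtain ⟨t, ht⟩ := AddChar.ne_one_iff.mp hψ
  obtain ⟨v, rfl⟩ := LinearMap.surjective_of_ne_zero hf t
  refine AddChar.sum_eq_zero_iff_ne_zero (ψ := ψ.compAddMonoidHom f.toAddMonoidHom) |>.mpr ?_
  exact AddChar.ne_zero_iff.mpr ⟨v, ht⟩

section Centralizer

variable {F A : Type*} [Field F] [Ring A] [Algebra F A]

theorem mem_ker_mulLeft_sub_mulRight {X Y : A} :
    Y ∈ LinearMap.ker (LinearMap.mulLeft F X - LinearMap.mulRight F X) ↔ Commute X Y := by
  simp [sub_eq_zero, Commute, SemiconjBy]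

variable [Fintype F] [Fintype A]

theorem card_pow_finrank_ker_mulLeft_sub_mulRight (X : A) :
    Fintype.card F ^ Module.finrank F
      (LinearMap.ker (LinearMap.mulLeft F X - LinearMap.mulRight F X)) =
      Nat.card {Y // Commute X Y} := by
  classical
  rw [← Module.card_eq_pow_finrank (K := F), ← Nat.card_eq_fintype_card]
  exact Nat.card_congr (Equiv.subtypeEquivRight fun _ => mem_ker_mulLeft_sub_mulRight)

theorem sum_card_pow_finrank_centralizer_mul_addChar_eq_zero
    {R : Type*} [CommRing R] [IsDomain R] [CharZero R]
    {ψ : AddChar F R} (hψ : ψ ≠ 1) {τ : A →ₗ[F] F} (hτ : τ 1 ≠ 0) :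
    ∑ X : A, (Fintype.card F : R) ^ Module.finrank F
        (LinearMap.ker (LinearMap.mulLeft F X - LinearMap.mulRight F X)) * ψ (τ X) = 0 := by
  classical
  have hsum_centralizer (Y : A) : ∑ X : A, (if Commute X Y then ψ (τ X) else 0) = 0 := by
    let C := LinearMap.ker (LinearMap.mulLeft F Y - LinearMap.mulRight F Y)
    have hC : ∀ X, X ∈ ({X | Commute X Y} : Finset A) ↔ X ∈ C := fun X => by
      rw [mem_filter, mem_ker_mulLeft_sub_mulRight, Commute.symm_iff]
      simp
    have hτC : τ ∘ₗ C.subtype ≠ 0 := fun h =>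
      hτ (by simpa using LinearMap.congr_fun h ⟨1, (hC 1).mp (by simp)⟩)
    rw [← sum_filter, sum_subtype _ hC]
    exact AddChar.sum_comp_linearMap_eq_zero hψ hτC
  calc ∑ X : A, (Fintype.card F : R) ^ Module.finrank F
          (LinearMap.ker (LinearMap.mulLeft F X - LinearMap.mulRight F X)) * ψ (τ X)
      = ∑ X : A, ∑ Y : A, if Commute X Y then ψ (τ X) else 0 := by
        refine sum_congr rfl fun X _ => ?_
        rw [← Nat.cast_pow, card_pow_finrank_ker_mulLeft_sub_mulRight, Nat.card_eq_fintype_card,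
          Fintype.card_subtype, ← sum_boole, sum_mul]
        simp only [ite_mul, one_mul, zero_mul]
    _ = ∑ Y : A, ∑ X : A, if Commute X Y then ψ (τ X) else 0 := sum_comm
    _ = 0 := sum_eq_zero fun Y _ => hsum_centralizer Y

end Centralizer

theorem sum_card_centralizer_char_trace_eq_zero_general
    (F : Type*) [Field F] [Fintype F]
    (ψ : AddChar F ℂ) (hψ : ψ ≠ 1)
    (n : ℕ) (hp : ¬ (ringChar F ∣ n)) :
    ∑ X : Matrix (Fin n) (Fin n) F,
        (Fintype.card F : ℂ) ^
            (Module.finrank F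
              (LinearMap.ker (LinearMap.mulLeft F X - LinearMap.mulRight F X))) *
          ψ (Matrix.trace X) = 0 := by
  have htrace_one : Matrix.traceLinearMap (Fin n) F F 1 ≠ 0 := by
    rwa [Matrix.traceLinearMap_apply, Matrix.trace_one, Fintype.card_fin, Ne, ringChar.spec]
  exact sum_card_pow_finrank_centralizer_mul_addChar_eq_zero
    (A := Matrix (Fin n) (Fin n) F) hψ htrace_one

/-- Let `F = F_q` be a finite field of characteristic `p` and let
`n ≥ 1` with `p ∤ n`.  Then `∑_{X ∈ gl_n(F_q)} q^{dim 𝔠(X)} ψ(tr X) = 0`, where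
`𝔠(X) = {Y : XY = YX}` is the Lie algebra centralizer of `X` and `ψ` is a nontrivial
additive character of `F_q`. -/
theorem sum_card_centralizer_char_trace_eq_zero
    (F : Type*) [Field F] [Fintype F]
    (ψ : AddChar F ℂ) (hψ : ψ ≠ 1)
    (n : ℕ) (hn : 1 ≤ n) (hp : ¬ (ringChar F ∣ n)) :
    ∑ X : Matrix (Fin n) (Fin n) F,
        (Fintype.card F : ℂ) ^
            (Module.finrank F
              (LinearMap.ker (LinearMap.mulLeft F X - LinearMap.mulRight F X))) *
          ψ (Matrix.trace X) = 0 :=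
  sum_card_centralizer_char_trace_eq_zero_general F ψ hψ n hp
end

section
/- Let q be a prime power, k ≥ 0, n ≥ 1, and let Ψ : F_q → ℂ^× be a nontrivial additive character. Then the number of quadruples (A, B, I, J), where A, B are n × n matrices, I is an n × k matrix and J is a k × n matrix over F_q, satisfying AB − BA + IJ = Id_n, equals q^{kn} · Σ_{X ∈ gl_n(F_q)} q^{dim 𝔠(X) + k · dim ker X} · Ψ(tr X), as an equality of complex numbers. Here 𝔠(X) = { Y ∈ gl_n(F_q) : XY = YX } and ker X is the kernel of X acting on F_q^n. -/
open scoped BigOperators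
open Finset
set_option linter.unusedSectionVars false
set_option linter.unusedVariables false
set_option maxHeartbeats 1000000

section aux
open scoped Classical
variable {F : Type*} [Field F] [Fintype F]

lemma addChar_map_sum {ι : Type*} (ψ : AddChar F ℂ) (s : Finset ι) (f : ι → F) :
    ψ (∑ i ∈ s, f i) = ∏ i ∈ s, ψ (f i) := by
  classical
  induction s using Finset.induction with
  | empty => simp
  | insert a s h ih => rw [Finset.sum_insert h, Finset.prod_insert h, AddChar.map_add_eq_mul, ih]

lemma sum_char_fun {ι : Type*} [Fintype ι] [DecidableEq ι] {ψ : AddChar F ℂ} (hψ : ψ ≠ 1)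
    (M : ι → F) :
    ∑ X : ι → F, ψ (∑ i, X i * M i) =
      if M = 0 then ((Fintype.card F : ℂ)) ^ (Fintype.card ι) else 0 := by
  have hprim := AddChar.IsPrimitive.of_ne_one hψ
  simp_rw [addChar_map_sum ψ Finset.univ]
  rw [← Fintype.prod_sum (fun i x => ψ (x * M i))]
  have h2 : ∀ i, ∑ x : F, ψ (x * M i) = if M i = 0 then (Fintype.card F : ℂ) else 0 := by
    intro i
    simpa using AddChar.sum_mulShift (M i) hprim
  simp_rw [h2]
  by_cases hM : M = 0
  · simp [hM, Finset.prod_const, Finset.card_univ]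
  · obtain ⟨i, hi⟩ : ∃ i, M i ≠ 0 := by
      by_contra h; push_neg at h; exact hM (funext h)
    rw [if_neg hM]
    exact Finset.prod_eq_zero (Finset.mem_univ i) (by simp [hi])

lemma sum_char_matrix {ι κ : Type*} [Fintype ι] [Fintype κ] [DecidableEq ι] [DecidableEq κ]
    {ψ : AddChar F ℂ} (hψ : ψ ≠ 1) (M : Matrix ι κ F) :
    ∑ X : Matrix ι κ F, ψ (∑ i, ∑ j, X i j * M i j) =
      if M = 0 then (Fintype.card F : ℂ) ^ (Fintype.card ι * Fintype.card κ) else 0 := by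
  have key := sum_char_fun (ι := ι × κ) hψ (fun p => M p.1 p.2)
  have step : ∑ X : Matrix ι κ F, ψ (∑ i, ∑ j, X i j * M i j)
      = ∑ Y : ι × κ → F, ψ (∑ p : ι × κ, Y p * M p.1 p.2) :=
    Fintype.sum_equiv ((Equiv.curry ι κ F).symm) _ _
      (fun X => by rw [Fintype.sum_prod_type]; rfl)
  rw [step, key]
  rw [← Fintype.card_prod]
  congr 1
  simp only [eq_iff_iff]
  constructor
  · intro h; ext i j; exact congrFun h (i, j)
  · intro h; funext p; rw [h]; rfl

lemma sum_char_trace {ι κ : Type*} [Fintype ι] [Fintype κ] [DecidableEq ι] [DecidableEq κ]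
    {ψ : AddChar F ℂ} (hψ : ψ ≠ 1) (M : Matrix ι κ F) :
    ∑ J : Matrix κ ι F, ψ ((M * J).trace) =
      if M = 0 then (Fintype.card F : ℂ) ^ (Fintype.card κ * Fintype.card ι) else 0 := by
  have h : ∀ J : Matrix κ ι F, (M * J).trace = ∑ j : κ, ∑ i : ι, J j i * M.transpose j i := by
    intro J
    simp only [Matrix.trace, Matrix.diag, Matrix.mul_apply, Matrix.transpose_apply]
    rw [Finset.sum_comm]
    exact Finset.sum_congr rfl fun j _ => Finset.sum_congr rfl fun i _ => mul_comm _ _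
  simp_rw [h]
  rw [sum_char_matrix hψ M.transpose]
  simp [Matrix.transpose_eq_zero]

lemma card_commutant {n : ℕ} (X : Matrix (Fin n) (Fin n) F) :
    Fintype.card {A : Matrix (Fin n) (Fin n) F // A * X - X * A = 0}
      = Fintype.card F ^ Module.finrank F
          (LinearMap.ker (LinearMap.mulLeft F X - LinearMap.mulRight F X)) := by
  rw [Fintype.card_congr (Equiv.subtypeEquivRight
    (q := fun A => A ∈ LinearMap.ker (LinearMap.mulLeft F X - LinearMap.mulRight F X))
    (fun A => by
      simp only [LinearMap.mem_ker, LinearMap.sub_apply, LinearMap.mulLeft_apply,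
        LinearMap.mulRight_apply, sub_eq_zero]
      exact eq_comm))]
  exact Module.card_eq_pow_finrank

lemma card_colker {k n : ℕ} (X : Matrix (Fin n) (Fin n) F) :
    Fintype.card {I : Matrix (Fin n) (Fin k) F // X * I = 0}
      = Fintype.card F ^ (k * Module.finrank F (LinearMap.ker X.mulVecLin)) := by
  have e : {I : Matrix (Fin n) (Fin k) F // X * I = 0}
      ≃ (Fin k → LinearMap.ker X.mulVecLin) :=
  { toFun := fun I j => ⟨fun l => I.1 l j, by
      rw [LinearMap.mem_ker, Matrix.mulVecLin_apply]
      funext i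
      have := congrFun (congrFun I.2 i) j
      simpa [Matrix.mulVec, Matrix.mul_apply, dotProduct] using this⟩
    invFun := fun v => ⟨Matrix.of (fun l j => (v j).1 l), by
      ext i j
      have h := (v j).2
      rw [LinearMap.mem_ker, Matrix.mulVecLin_apply] at h
      have := congrFun h i
      simpa [Matrix.mulVec, Matrix.mul_apply, dotProduct] using this⟩
    left_inv := fun I => Subtype.ext rfl
    right_inv := fun v => funext fun j => Subtype.ext rfl }
  rw [Fintype.card_congr e, Fintype.card_fun]
  rw [Module.card_eq_pow_finrank (K := F) (V := LinearMap.ker X.mulVecLin)]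
  rw [← pow_mul, Fintype.card_fin, mul_comm]

end aux



/-- For a finite field `F_q`, `k ≥ 0`, `n ≥ 1` and a nontrivial additive
character `ψ`, the number of quadruples `(A, B, I, J)` (with `A, B` of size `n × n`,
`I` of size `n × k`, `J` of size `k × n`) solving `AB - BA + IJ = Id_n` equals
`q^{kn} ∑_{X ∈ gl_n(F_q)} q^{dim 𝔠(X) + k ⬝ dim ker X} ψ(tr X)`, as complex numbers. -/
theorem card_twisted_ADHM_eq_fourier
    (F : Type*) [Field F] [Fintype F]
    (ψ : AddChar F ℂ) (hψ : ψ ≠ 1)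
    (k n : ℕ) (hn : 1 ≤ n) :
    (Nat.card {x : Matrix (Fin n) (Fin n) F × Matrix (Fin n) (Fin n) F ×
        Matrix (Fin n) (Fin k) F × Matrix (Fin k) (Fin n) F //
        x.1 * x.2.1 - x.2.1 * x.1 + x.2.2.1 * x.2.2.2 = 1} : ℂ) =
      (Fintype.card F : ℂ) ^ (k * n) *
        ∑ X : Matrix (Fin n) (Fin n) F,
          (Fintype.card F : ℂ) ^
              (Module.finrank F
                  (LinearMap.ker (LinearMap.mulLeft F X - LinearMap.mulRight F X)) +
                k * Module.finrank F (LinearMap.ker (Matrix.mulVecLin X))) *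
            ψ (Matrix.trace X) := by
  classical
  set q : ℂ := (Fintype.card F : ℂ) with hqdef
  have hq0 : q ≠ 0 := Nat.cast_ne_zero.mpr Fintype.card_ne_zero
  set Mnn := Matrix (Fin n) (Fin n) F
  set Mnk := Matrix (Fin n) (Fin k) F
  set Mkn := Matrix (Fin k) (Fin n) F
  set d : Mnn → ℕ := fun X => Module.finrank F
      (LinearMap.ker (LinearMap.mulLeft F X - LinearMap.mulRight F X)) with hd
  set e : Mnn → ℕ := fun X => Module.finrank F (LinearMap.ker X.mulVecLin) with he
  -- the key trace identity
  have key : ∀ (X A B : Mnn) (I : Mnk) (J : Mkn),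
      ((1 - (A * B - B * A + I * J)) * X).trace
        = X.trace + ((A * X - X * A) * B).trace + ((((-X)) * I) * J).trace := by
    intro X A B I J
    have e1 : (1 - (A * B - B * A + I * J)) * X = X - A * B * X + B * A * X - I * J * X := by
      noncomm_ring
    have e2 : (A * X - X * A) * B = A * X * B - X * A * B := by noncomm_ring
    have e3 : ((-X) * I) * J = -(X * I * J) := by rw [Matrix.neg_mul, Matrix.neg_mul]
    rw [e1, e2, e3, Matrix.trace_sub, Matrix.trace_add, Matrix.trace_sub, Matrix.trace_sub,
      Matrix.trace_neg, Matrix.trace_mul_cycle A X B, ← Matrix.trace_mul_cycle A B X,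
      ← Matrix.trace_mul_cycle I J X]
    ring
  -- inner sums
  have hB : ∀ X A : Mnn, ∑ B : Mnn, ψ (((A * X - X * A) * B).trace)
      = if A * X - X * A = 0 then q ^ (n * n) else 0 := by
    intro X A
    simpa using sum_char_trace hψ (A * X - X * A)
  have hJ : ∀ (X : Mnn) (I : Mnk), ∑ J : Mkn, ψ ((((-X) * I) * J).trace)
      = if X * I = 0 then q ^ (k * n) else 0 := by
    intro X I
    have h0 : ((-X : Mnn) * I = 0) = (X * I = 0) := by
      rw [Matrix.neg_mul, neg_eq_zero]
    have := sum_char_trace hψ ((-X) * I)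
    simp only [h0] at this
    simpa using this
  have hA : ∀ X : Mnn, ∑ A : Mnn, (if A * X - X * A = 0 then q ^ (n * n) else 0)
      = q ^ (n * n) * q ^ (d X) := by
    intro X
    rw [Finset.sum_ite, Finset.sum_const, Finset.sum_const_zero, add_zero, nsmul_eq_mul,
      ← Fintype.card_subtype, card_commutant X]
    push_cast
    ring
  have hI : ∀ X : Mnn, ∑ I : Mnk, (if X * I = 0 then q ^ (k * n) else 0)
      = q ^ (k * n) * q ^ (k * e X) := by
    intro X
    rw [Finset.sum_ite, Finset.sum_const, Finset.sum_const_zero, add_zero, nsmul_eq_mul,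
      ← Fintype.card_subtype, card_colker X]
    push_cast
    ring
  -- evaluate the inner sum over quadruples for fixed X
  have step3 : ∀ X : Mnn,
      (∑ x : Mnn × Mnn × Mnk × Mkn,
          ψ (((1 - (x.1 * x.2.1 - x.2.1 * x.1 + x.2.2.1 * x.2.2.2)) * X).trace))
        = ψ X.trace * (q ^ (n * n) * q ^ (d X)) * (q ^ (k * n) * q ^ (k * e X)) := by
    intro X
    have hIJ : (∑ I : Mnk, ∑ J : Mkn, ψ ((((-X)) * I * J).trace))
        = q ^ (k * n) * q ^ (k * e X) := by
      simp_rw [hJ X]; exact hI X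
    have hAB : (∑ A : Mnn, ∑ B : Mnn, ψ (((A * X - X * A) * B).trace))
        = q ^ (n * n) * q ^ (d X) := by
      simp_rw [hB X]; exact hA X
    simp_rw [Fintype.sum_prod_type]
    simp_rw [key, AddChar.map_add_eq_mul]
    calc (∑ A : Mnn, ∑ B : Mnn, ∑ I : Mnk, ∑ J : Mkn,
            ψ X.trace * ψ (((A * X - X * A) * B).trace) * ψ ((((-X)) * I * J).trace))
        = ∑ A : Mnn, ∑ B : Mnn, (ψ X.trace * ψ (((A * X - X * A) * B).trace))
            * (∑ I : Mnk, ∑ J : Mkn, ψ ((((-X)) * I * J).trace)) := by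
          refine Finset.sum_congr rfl fun A _ => Finset.sum_congr rfl fun B _ => ?_
          rw [Finset.mul_sum]
          exact Finset.sum_congr rfl fun I _ => (Finset.mul_sum _ _ _).symm
      _ = (∑ A : Mnn, ∑ B : Mnn, ψ X.trace * ψ (((A * X - X * A) * B).trace))
            * (q ^ (k * n) * q ^ (k * e X)) := by
          simp_rw [hIJ, ← Finset.sum_mul]
      _ = ψ X.trace * (q ^ (n * n) * q ^ (d X)) * (q ^ (k * n) * q ^ (k * e X)) := by
          congr 1
          simp_rw [← Finset.mul_sum]
          rw [hAB]
  -- step 1 : count via characters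
  have step1 : (Nat.card {x : Mnn × Mnn × Mnk × Mkn //
        x.1 * x.2.1 - x.2.1 * x.1 + x.2.2.1 * x.2.2.2 = 1} : ℂ) * q ^ (n * n)
      = ∑ x : Mnn × Mnn × Mnk × Mkn, ∑ X : Mnn,
          ψ (((1 - (x.1 * x.2.1 - x.2.1 * x.1 + x.2.2.1 * x.2.2.2)) * X).trace) := by
    have hx : ∀ x : Mnn × Mnn × Mnk × Mkn,
        ∑ X : Mnn, ψ (((1 - (x.1 * x.2.1 - x.2.1 * x.1 + x.2.2.1 * x.2.2.2)) * X).trace)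
          = if x.1 * x.2.1 - x.2.1 * x.1 + x.2.2.1 * x.2.2.2 = 1 then q ^ (n * n) else 0 := by
      intro x
      have h0 : ((1 - (x.1 * x.2.1 - x.2.1 * x.1 + x.2.2.1 * x.2.2.2) : Mnn) = 0)
          = (x.1 * x.2.1 - x.2.1 * x.1 + x.2.2.1 * x.2.2.2 = 1) :=
        propext ⟨fun h => (sub_eq_zero.mp h).symm, fun h => sub_eq_zero.mpr h.symm⟩
      have := sum_char_trace hψ (1 - (x.1 * x.2.1 - x.2.1 * x.1 + x.2.2.1 * x.2.2.2))
      simp only [h0] at this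
      simpa using this
    simp_rw [hx]
    rw [Finset.sum_ite, Finset.sum_const, Finset.sum_const_zero, add_zero, nsmul_eq_mul,
      ← Fintype.card_subtype, Nat.card_eq_fintype_card]
  -- assemble
  have main : (Nat.card {x : Mnn × Mnn × Mnk × Mkn //
        x.1 * x.2.1 - x.2.1 * x.1 + x.2.2.1 * x.2.2.2 = 1} : ℂ) * q ^ (n * n)
      = (q ^ (k * n) * ∑ X : Mnn, q ^ (d X + k * e X) * ψ X.trace) * q ^ (n * n) := by
    rw [step1, Finset.sum_comm]
    calc (∑ X : Mnn, ∑ x : Mnn × Mnn × Mnk × Mkn,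
            ψ (((1 - (x.1 * x.2.1 - x.2.1 * x.1 + x.2.2.1 * x.2.2.2)) * X).trace))
        = ∑ X : Mnn, ψ X.trace * (q ^ (n * n) * q ^ (d X)) * (q ^ (k * n) * q ^ (k * e X)) :=
          Finset.sum_congr rfl fun X _ => step3 X
      _ = (q ^ (k * n) * ∑ X : Mnn, q ^ (d X + k * e X) * ψ X.trace) * q ^ (n * n) := by
          rw [Finset.mul_sum, Finset.sum_mul]
          refine Finset.sum_congr rfl fun X _ => ?_
          rw [pow_add]
          ring
  exact mul_right_cancel₀ (pow_ne_zero _ hq0) main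
end
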